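/- Let {A_v}_{v∈V} be a non-empty finite collection of events in a probability space, where the index set V is the vertex set of a chordal graph G. Then for every positive integer r, Σ_{I∈𝒞(G)} (−1)^{|I|−1} · Pr(⋂_{i∈I} A_i) ≥ Σ_{I∈𝒞(G), |I|≤2r} (−1)^{|I|−1} · Pr(⋂_{i∈I} A_i), i.e., the full alternating sum over the clique complex is at least any of its even-order truncations. -/

import Mathlib

open MeasureTheory Finset
open scoped Classical

/-- A graph is chordal if it contains no induced cycle of length four or greater. -/
def SimpleGraph.IsChordal {V : Type*} (G : SimpleGraph V) : Prop :=
  ∀ n : ℕ, 4 ≤ n → ∀ s : Set V, ¬ Nonempty (G.induce s ≃g SimpleGraph.cycleGraph n)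

/-- The clique complex of `G`: the collection of all non-empty cliques of `G`. -/
noncomputable def SimpleGraph.cliqueComplex {V : Type*} [Fintype V] (G : SimpleGraph V) :
    Finset (Finset V) :=
  Finset.univ.powerset.filter fun I => I.Nonempty ∧ G.IsClique (I : Set V)

/-- The independence number of `G`: the maximum size of a set of pairwise
non-adjacent vertices. -/
noncomputable def SimpleGraph.indepNum' {V : Type*} [Fintype V] (G : SimpleGraph V) : ℕ :=
  sSup {n | ∃ s : Finset V, ((s : Set V).Pairwise fun v w => ¬ G.Adj v w) ∧ s.card = n}

/-!
Write `S(ω) = {v | ω ∈ A v}` and let `E(s, t)` be the sum of `(-1) ^ |K|` over the cliques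
`K ⊆ s` with `|K| ≥ t`. Integrating indicator functions, the full sum minus the truncated one
is `∫ -E(S(ω), 2r + 1) dμ`, so it suffices that `(-1) ^ t * E(s, t) ≥ 0` for `t ≥ 1`.
Deleting a vertex `v ∈ s` gives `E(s, t) = E(s - v, t) - E(N(v) ∩ s, t - 1)`, which carries
the sign from `t - 1` to `t`. For `t = 1`, `E(s, 1)` is minus the number of connected
components of `G[s]`, because for chordal `G` the component count obeys the same recursion:
two neighbours of `v` joined in `s - v` are joined inside `N(v)`, as a shortest connecting
path whose interior avoids `N(v)` would close an induced cycle of length at least four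
through `v`.
-/

theorem Finset.card_image_eq_card_image_of_iff {α β γ : Type*} [DecidableEq β] [DecidableEq γ]
    {t : Finset α} {f : α → β} {g : α → γ}
    (h : ∀ a ∈ t, ∀ b ∈ t, f a = f b ↔ g a = g b) :
    #(t.image f) = #(t.image g) := by
  -- both images are in bijection with the image of `a ↦ (f a, g a)`
  set t' := t.image fun a ↦ (f a, g a)
  have hf : t.image f = t'.image Prod.fst := by simp [t', image_image, Function.comp_def]
  have hg : t.image g = t'.image Prod.snd := by simp [t', image_image, Function.comp_def]
  rw [hf, hg, card_image_of_injOn (f := Prod.fst), card_image_of_injOn (f := Prod.snd)]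
  all_goals
    rintro _ hx _ hy hxy
    obtain ⟨a, ha, rfl⟩ := mem_image.1 hx
    obtain ⟨b, hb, rfl⟩ := mem_image.1 hy
  · exact Prod.ext ((h a ha b hb).2 hxy) hxy
  · exact Prod.ext hxy ((h a ha b hb).1 hxy)

namespace SimpleGraph

variable {V : Type*} {G : SimpleGraph V}

theorem IsChordal.not_cycleGraph_isIndContained (hG : G.IsChordal) {n : ℕ} (hn : 4 ≤ n) :
    ¬ cycleGraph n ⊴ G := fun h ↦
  let ⟨s, ⟨e⟩⟩ := isIndContained_iff_exists_iso_induce.1 h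
  hG n hn s ⟨e.symm⟩

theorem cycleGraph_adj_iff_val {n : ℕ} {i j : Fin (n + 2)} :
    (cycleGraph (n + 2)).Adj i j ↔
      i.val + 1 = j.val ∨ j.val + 1 = i.val ∨ (i.val = 0 ∧ j.val = n + 1) ∨
        (j.val = 0 ∧ i.val = n + 1) := by
  have hsub (a b : Fin (n + 2)) :
      (a - b).val = 1 ↔ a.val = b.val + 1 ∨ (a.val = 0 ∧ b.val = n + 1) := by
    rcases le_or_gt b a with h | h
    · rw [Fin.sub_val_of_le h]; rw [Fin.le_def] at h; omega
    · rw [Fin.coe_sub_iff_lt.2 h]; rw [Fin.lt_def] at h; omega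
  rw [cycleGraph_adj', hsub, hsub]
  omega

/-- Coning off a chordless path `f 0, …, f n` from a vertex adjacent to its ends only. -/
theorem cycleGraph_isIndContained_of_cone {f : ℕ → V} {v : V} {n : ℕ}
    (hinj : Set.InjOn f (Set.Iic n)) (hfv : ∀ k ≤ n, f k ≠ v)
    (hf : ∀ i ≤ n, ∀ j ≤ n, G.Adj (f i) (f j) ↔ i + 1 = j ∨ j + 1 = i)
    (hv : ∀ k ≤ n, G.Adj v (f k) ↔ k = 0 ∨ k = n) :
    cycleGraph (n + 2) ⊴ G := by
  let g : Fin (n + 2) → V := fun i ↦ if i.val ≤ n then f i else v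
  have hg_inj : g.Injective := by
    intro i j hij
    have hi := i.isLt
    have hj := j.isLt
    simp only [g] at hij
    split_ifs at hij with h₁ h₂ h₂
    · exact Fin.ext (hinj h₁ h₂ hij)
    · exact absurd hij (hfv _ h₁)
    · exact absurd hij.symm (hfv _ h₂)
    · exact Fin.ext (by omega)
  refine ⟨⟨⟨g, hg_inj⟩, fun {i j} ↦ ?_⟩⟩
  have hi := i.isLt
  have hj := j.isLt
  simp only [Function.Embedding.coeFn_mk, g, cycleGraph_adj_iff_val]
  split_ifs with h₁ h₂ h₂
  · rw [hf _ h₁ _ h₂]; omega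
  · rw [G.adj_comm, hv _ h₁]; omega
  · rw [hv _ h₂]; omega
  · simp only [SimpleGraph.irrefl, false_iff]; omega

variable (G) in
/-- Reachability in `G.induce s`, phrased without subtypes. -/
def ReachableIn (s : Set V) (a b : V) : Prop :=
  ∃ w : G.Walk a b, ∀ x ∈ w.support, x ∈ s

namespace ReachableIn

variable {s t : Set V} {a b c : V}

theorem refl (ha : a ∈ s) : G.ReachableIn s a a := ⟨.nil, by simpa using ha⟩

theorem symm : G.ReachableIn s a b → G.ReachableIn s b a
  | ⟨w, hw⟩ => ⟨w.reverse, by simpa using hw⟩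

theorem trans : G.ReachableIn s a b → G.ReachableIn s b c → G.ReachableIn s a c
  | ⟨w₁, hw₁⟩, ⟨w₂, hw₂⟩ => ⟨w₁.append w₂, fun x hx ↦
      (Walk.mem_support_append_iff w₁ w₂).1 hx |>.elim (hw₁ x) (hw₂ x)⟩

theorem mono (hst : s ⊆ t) : G.ReachableIn s a b → G.ReachableIn t a b
  | ⟨w, hw⟩ => ⟨w, fun x hx ↦ hst (hw x hx)⟩

theorem of_adj (ha : a ∈ s) (hb : b ∈ s) (hab : G.Adj a b) : G.ReachableIn s a b :=
  ⟨.cons hab .nil, by simp [ha, hb]⟩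

theorem right_mem : G.ReachableIn s a b → b ∈ s
  | ⟨w, hw⟩ => hw b w.end_mem_support

theorem exists_adj_of_insert {v : V} (hav : a ≠ v)
    (h : G.ReachableIn (insert v s) a v) : ∃ x, G.Adj v x ∧ G.ReachableIn s a x := by
  obtain ⟨w, hw⟩ := h
  induction w with
  | nil => exact absurd rfl hav
  | @cons a a' v hadj q ih =>
    have ha : a ∈ s := (hw a (by simp)).resolve_left hav
    have hq : ∀ x ∈ q.support, x ∈ insert v s := fun x hx ↦ hw x (by simp [hx])
    by_cases ha' : a' = v
    · subst ha'
      exact ⟨a, hadj.symm, .refl ha⟩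
    · obtain ⟨x, hvx, hx⟩ := ih ha' hq
      have ha's : a' ∈ s := (hq a' q.start_mem_support).resolve_left ha'
      exact ⟨x, hvx, (of_adj ha ha's hadj).trans hx⟩

theorem insert_iff {v : V} (h : ¬ G.ReachableIn (insert v s) a v) :
    G.ReachableIn (insert v s) a b ↔ G.ReachableIn s a b := by
  refine ⟨fun ⟨w, hw⟩ ↦ ⟨w, fun x hx ↦ (hw x hx).resolve_left ?_⟩,
    .mono (Set.subset_insert v s)⟩
  rintro rfl
  exact h ⟨w.takeUntil _ hx, fun y hy ↦ hw y (w.support_takeUntil_subset_support hx hy)⟩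

end ReachableIn

namespace Walk

variable {s : Set V} {a b : V}

def IsShortestIn (p : G.Walk a b) (s : Set V) : Prop :=
  (∀ x ∈ p.support, x ∈ s) ∧
    ∀ q : G.Walk a b, (∀ x ∈ q.support, x ∈ s) → p.length ≤ q.length

theorem exists_isShortestIn (w : G.Walk a b) (hw : ∀ x ∈ w.support, x ∈ s) :
    ∃ p : G.Walk a b, p.IsShortestIn s ∧ p.length ≤ w.length := by
  have hex : ∃ n, ∃ q : G.Walk a b, (∀ x ∈ q.support, x ∈ s) ∧ q.length = n :=
    ⟨_, w, hw, rfl⟩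
  obtain ⟨p, hp, hpn⟩ := Nat.find_spec hex
  refine ⟨p, ⟨hp, fun q hq ↦ hpn ▸ Nat.find_min' hex ⟨q, hq, rfl⟩⟩, ?_⟩
  exact hpn ▸ Nat.find_min' hex ⟨w, hw, rfl⟩

variable {p : G.Walk a b}

theorem IsShortestIn.getVert_injOn (hp : p.IsShortestIn s) :
    Set.InjOn p.getVert (Set.Iic p.length) := by
  suffices ∀ i j, i < j → j ≤ p.length → p.getVert i ≠ p.getVert j by
    intro i hi j hj hij
    by_contra hne
    rcases Nat.lt_or_gt_of_ne hne with h | h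
    · exact this i j h hj hij
    · exact this j i h hi hij.symm
  intro i j hij hj heq
  -- cut out the closed subwalk between the two visits
  let q := (p.take i).append ((p.drop j).copy heq.symm rfl)
  have := hp.2 q fun x hx ↦ by
    rcases (mem_support_append_iff _ _).1 hx with hx | hx
    · exact hp.1 x ((p.isSubwalk_take i).support_subset hx)
    · rw [support_copy] at hx
      exact hp.1 x ((p.isSubwalk_drop j).support_subset hx)
  simp only [q, length_append, length_copy, take_length, drop_length] at this
  omega

theorem IsShortestIn.adj_getVert_iff (hp : p.IsShortestIn s)
    {i j : ℕ} (hi : i ≤ p.length) (hj : j ≤ p.length) :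
    G.Adj (p.getVert i) (p.getVert j) ↔ i + 1 = j ∨ j + 1 = i := by
  refine ⟨fun hadj ↦ ?_, ?_⟩
  · suffices ∀ i j, i + 2 ≤ j → j ≤ p.length → ¬ G.Adj (p.getVert i) (p.getVert j) by
      have hne : i ≠ j := by rintro rfl; exact G.irrefl hadj
      by_contra hfar
      rcases Nat.lt_or_gt_of_ne hne with h | h
      · exact this i j (by omega) hj hadj
      · exact this j i (by omega) hi hadj.symm
    intro i j hij hj hadj
    -- shortcut along the chord
    let q := (p.take i).append (cons hadj (p.drop j))
    have := hp.2 q fun x hx ↦ by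
      rcases (mem_support_append_iff _ _).1 hx with hx | hx
      · exact hp.1 x ((p.isSubwalk_take i).support_subset hx)
      · rw [support_cons, List.mem_cons] at hx
        rcases hx with rfl | hx
        · exact hp.1 _ (getVert_mem_support _ _)
        · exact hp.1 x ((p.isSubwalk_drop j).support_subset hx)
    simp only [q, length_append, length_cons, take_length, drop_length] at this
    omega
  · rintro (rfl | rfl)
    · exact p.adj_getVert_succ (by omega)
    · exact (p.adj_getVert_succ (by omega)).symm

end Walk

theorem IsChordal.reachableIn_inter_neighborSet (hG : G.IsChordal) {s : Set V} {v a b : V}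
    (hv : v ∉ s) (ha : G.Adj v a) (hb : G.Adj v b) (hab : G.ReachableIn s a b) :
    G.ReachableIn (s ∩ G.neighborSet v) a b := by
  obtain ⟨w, hw⟩ := hab
  induction hn : w.length using Nat.strong_induction_on generalizing a b with
  | _ n ih =>
  obtain ⟨p, hp, hpw⟩ := w.exists_isShortestIn hw
  by_cases hmid : ∃ k, 0 < k ∧ k < p.length ∧ G.Adj v (p.getVert k)
  · obtain ⟨k, hk₀, hkp, hvk⟩ := hmid
    have hleft := ih k (by omega) ha hvk (p.take k)
      (fun x hx ↦ hp.1 x ((p.isSubwalk_take k).support_subset hx)) (by simp; omega)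
    have hright := ih (p.length - k) (by omega) hvk hb (p.drop k)
      (fun x hx ↦ hp.1 x ((p.isSubwalk_drop k).support_subset hx)) (by simp)
    exact hleft.trans hright
  push Not at hmid
  have hvp : ∀ k ≤ p.length, G.Adj v (p.getVert k) ↔ k = 0 ∨ k = p.length := by
    refine fun k hk ↦ ⟨fun h ↦ ?_, ?_⟩
    · by_contra hk'
      exact hmid k (by omega) (by omega) h
    · rintro (rfl | rfl)
      · simpa using ha
      · simpa using hb
  by_cases hlen : 2 ≤ p.length
  -- `p` is chordless and only its ends see `v`, so `v` closes an induced `(p.length + 2)`-cycle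
  · refine absurd (cycleGraph_isIndContained_of_cone hp.getVert_injOn (fun k _ h ↦ ?_)
      (fun i hi j hj ↦ hp.adj_getVert_iff hi hj) hvp)
      (hG.not_cycleGraph_isIndContained (by omega))
    exact hv (h ▸ hp.1 _ (p.getVert_mem_support k))
  · refine ⟨p, fun x hx ↦ ⟨hp.1 x hx, ?_⟩⟩
    obtain ⟨k, rfl, hk⟩ := Walk.mem_support_iff_exists_getVert.1 hx
    exact (hvp k hk).2 (by omega)

variable (G) in
noncomputable def componentIn (s : Finset V) (a : V) : Finset V := {x ∈ s | G.ReachableIn s a x}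

variable (G) in
noncomputable def componentsIn (s : Finset V) : Finset (Finset V) := s.image (G.componentIn s)

section Components

variable {s : Finset V} {v a b : V}

theorem mem_componentIn : b ∈ G.componentIn s a ↔ b ∈ s ∧ G.ReachableIn s a b := mem_filter

theorem mem_componentIn_self (ha : a ∈ s) : a ∈ G.componentIn s a :=
  mem_componentIn.2 ⟨ha, .refl ha⟩

theorem componentIn_eq_componentIn_iff (ha : a ∈ s) :
    G.componentIn s a = G.componentIn s b ↔ G.ReachableIn s a b := by
  refine ⟨fun h ↦ (mem_componentIn.1 (h ▸ mem_componentIn_self ha)).2.symm, fun h ↦ ?_⟩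
  ext x
  simp only [mem_componentIn]
  exact and_congr_right fun _ ↦ ⟨h.symm.trans, h.trans⟩

theorem componentIn_insert (h : ¬ G.ReachableIn (insert v s : Set V) a v) :
    G.componentIn (insert v s) a = G.componentIn s a := by
  ext x
  simp only [mem_componentIn, coe_insert, mem_insert]
  refine ⟨fun ⟨hx, hax⟩ ↦ ⟨hx.resolve_left ?_, (ReachableIn.insert_iff h).1 hax⟩,
    fun ⟨hx, hax⟩ ↦ ⟨.inr hx, (ReachableIn.insert_iff h).2 hax⟩⟩
  rintro rfl
  exact h hax

theorem not_reachableIn_insert_iff (hv : v ∉ s) (ha : a ∈ s) :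
    ¬ G.ReachableIn (insert v s : Set V) a v ↔ ∀ x ∈ G.componentIn s a, ¬ G.Adj v x := by
  refine ⟨fun h x hx hvx ↦ h ?_, fun h hav ↦ ?_⟩
  · obtain ⟨hxs, hax⟩ := mem_componentIn.1 hx
    exact (hax.mono (Set.subset_insert v _)).trans
      (.of_adj (Set.mem_insert_of_mem v hxs) (Set.mem_insert v _) hvx.symm)
  · obtain ⟨x, hvx, hax⟩ := hav.exists_adj_of_insert (by rintro rfl; exact hv ha)
    exact h x (mem_componentIn.2 ⟨hax.right_mem, hax⟩) hvx

theorem componentsIn_insert (hv : v ∉ s) :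
    G.componentsIn (insert v s) =
      insert (G.componentIn (insert v s) v)
        {C ∈ G.componentsIn s | ∀ x ∈ C, ¬ G.Adj v x} := by
  ext C
  simp only [componentsIn, mem_image, mem_insert, mem_filter]
  constructor
  · rintro ⟨a, ha, rfl⟩
    by_cases hav : G.ReachableIn (insert v s : Set V) a v
    · exact .inl ((componentIn_eq_componentIn_iff (mem_insert.2 ha)).2 (by rwa [coe_insert]))
    · have has : a ∈ s := ha.resolve_left (by rintro rfl; exact hav (.refl (by simp)))
      rw [componentIn_insert hav]
      exact .inr ⟨⟨a, has, rfl⟩, (not_reachableIn_insert_iff hv has).1 hav⟩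
  · rintro (rfl | ⟨⟨a, ha, rfl⟩, hC⟩)
    · exact ⟨v, .inl rfl, rfl⟩
    · exact ⟨a, .inr ha, componentIn_insert ((not_reachableIn_insert_iff hv ha).2 hC)⟩

theorem filter_componentsIn_exists_adj :
    {C ∈ G.componentsIn s | ∃ x ∈ C, G.Adj v x} =
      {x ∈ s | G.Adj v x}.image (G.componentIn s) := by
  ext C
  simp only [componentsIn, mem_filter, mem_image]
  constructor
  · rintro ⟨⟨a, ha, rfl⟩, x, hx, hvx⟩
    obtain ⟨hxs, hax⟩ := mem_componentIn.1 hx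
    exact ⟨x, ⟨hxs, hvx⟩, ((componentIn_eq_componentIn_iff ha).2 hax).symm⟩
  · rintro ⟨x, ⟨hxs, hvx⟩, rfl⟩
    exact ⟨⟨x, hxs, rfl⟩, x, mem_componentIn_self hxs, hvx⟩

theorem IsChordal.card_componentsIn_insert_add (hG : G.IsChordal) (hv : v ∉ s) :
    #(G.componentsIn (insert v s)) + #(G.componentsIn {x ∈ s | G.Adj v x}) =
      #(G.componentsIn s) + 1 := by
  have hnew :
      G.componentIn (insert v s) v ∉ {C ∈ G.componentsIn s | ∀ x ∈ C, ¬ G.Adj v x} := by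
    intro hmem
    obtain ⟨a, -, ha⟩ := mem_image.1 (mem_filter.1 hmem).1
    exact hv (mem_componentIn.1 (ha ▸ mem_componentIn_self (mem_insert_self v s))).1
  have hadj : #{C ∈ G.componentsIn s | ∃ x ∈ C, G.Adj v x} =
      #(G.componentsIn {x ∈ s | G.Adj v x}) := by
    rw [filter_componentsIn_exists_adj, componentsIn]
    refine card_image_eq_card_image_of_iff fun a ha b hb ↦ ?_
    rw [componentIn_eq_componentIn_iff (mem_filter.1 ha).1, componentIn_eq_componentIn_iff ha]
    refine ⟨fun h ↦ ?_, fun h ↦ h.mono (coe_subset.2 (filter_subset _ _))⟩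
    refine (hG.reachableIn_inter_neighborSet (s := s) (by simpa using hv)
      (mem_filter.1 ha).2 (mem_filter.1 hb).2 h).mono fun x hx ↦ ?_
    simpa using hx
  have hsplit :=
    card_filter_add_card_filter_not (s := G.componentsIn s) (fun C ↦ ∃ x ∈ C, G.Adj v x)
  simp only [not_exists, not_and] at hsplit
  rw [componentsIn_insert hv, card_insert_of_notMem hnew]
  omega

end Components

variable (G) in
/-- For `t = 0` this is minus the reduced Euler characteristic of the clique complex of `G[s]`. -/
noncomputable def cliqueTailSum (s : Finset V) (t : ℕ) : ℝ :=
  ∑ K ∈ s.powerset.filter (fun K : Finset V ↦ G.IsClique (K : Set V) ∧ t ≤ #K), (-1) ^ #K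

section CliqueTailSum

variable {s : Finset V} {v : V} {t : ℕ}

theorem cliqueTailSum_empty (ht : t ≠ 0) : G.cliqueTailSum ∅ t = 0 := by
  simp [cliqueTailSum, filter_singleton, ht]

theorem cliqueTailSum_zero (s : Finset V) : G.cliqueTailSum s 0 = 1 + G.cliqueTailSum s 1 := by
  have hfilter : s.powerset.filter (fun K : Finset V ↦ G.IsClique (K : Set V) ∧ 0 ≤ #K) =
      insert ∅ (s.powerset.filter fun K : Finset V ↦ G.IsClique (K : Set V) ∧ 1 ≤ #K) := by
    ext K
    rcases K.eq_empty_or_nonempty with rfl | hK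
    · simp
    · simp [hK.ne_empty, Nat.one_le_iff_ne_zero]
  rw [cliqueTailSum, hfilter, sum_insert (by simp)]
  simp [cliqueTailSum]

theorem cliqueTailSum_insert (hv : v ∉ s) :
    G.cliqueTailSum (insert v s) t =
      G.cliqueTailSum s t - G.cliqueTailSum {x ∈ s | G.Adj v x} (t - 1) := by
  set N := {x ∈ s | G.Adj v x}
  have hcone : ∀ K ∈ s.powerset,
      (if G.IsClique (insert v K : Finset V) ∧ t ≤ #(insert v K) then (-1 : ℝ) ^ #(insert v K)
        else 0) =
      -if K ⊆ N then (if G.IsClique (K : Set V) ∧ t - 1 ≤ #K then (-1) ^ #K else 0)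
        else 0 := by
    intro K hK
    have hKs := mem_powerset.1 hK
    have hvK : v ∉ K := fun h ↦ hv (hKs h)
    have hclique : G.IsClique (insert v K : Finset V) ↔ K ⊆ N ∧ G.IsClique (K : Set V) := by
      rw [coe_insert, isClique_insert, and_comm]
      refine and_congr_left fun _ ↦ ⟨fun h x hx ↦ mem_filter.2 ⟨hKs hx, h x hx ?_⟩,
        fun h x hx _ ↦ (mem_filter.1 (h hx)).2⟩
      rintro rfl
      exact hvK hx
    have hcard : t ≤ #K + 1 ↔ t - 1 ≤ #K := by omega
    simp only [card_insert_of_notMem hvK, hclique, hcard, pow_succ]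
    by_cases hKN : K ⊆ N <;> simp only [hKN, true_and, false_and, if_true, if_false, neg_zero]
    split_ifs <;> ring
  have hN : ∀ f : Finset V → ℝ,
      ∑ K ∈ s.powerset, (if K ⊆ N then f K else 0) = ∑ K ∈ N.powerset, f K := by
    intro f
    rw [← sum_filter]
    congr 1
    ext K
    simp only [mem_filter, mem_powerset, and_iff_right_iff_imp]
    exact fun h ↦ h.trans (filter_subset _ _)
  simp only [cliqueTailSum, sum_filter]
  rw [sum_powerset_insert hv, sum_congr rfl hcone, sum_neg_distrib, hN, sub_eq_add_neg]

theorem IsChordal.cliqueTailSum_one (hG : G.IsChordal) (s : Finset V) :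
    G.cliqueTailSum s 1 = -#(G.componentsIn s) := by
  induction s using Finset.strongInduction with
  | H s ih =>
  rcases s.eq_empty_or_nonempty with rfl | ⟨v, hv⟩
  · simp [cliqueTailSum_empty, componentsIn]
  have hv' : v ∉ s.erase v := notMem_erase v s
  have hcomp : (#(G.componentsIn s) : ℝ) + #(G.componentsIn {x ∈ s.erase v | G.Adj v x}) =
      #(G.componentsIn (s.erase v)) + 1 := by
    exact_mod_cast insert_erase hv ▸ hG.card_componentsIn_insert_add hv'
  rw [← insert_erase hv, cliqueTailSum_insert hv', Nat.sub_self, cliqueTailSum_zero,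
    ih _ (erase_ssubset hv), ih _ ((filter_subset _ _).trans_ssubset (erase_ssubset hv)),
    insert_erase hv]
  linarith

theorem IsChordal.neg_one_pow_mul_cliqueTailSum_nonneg (hG : G.IsChordal) (s : Finset V)
    (ht : t ≠ 0) : 0 ≤ (-1) ^ t * G.cliqueTailSum s t := by
  induction s using Finset.strongInduction generalizing t with
  | H s ih =>
  rcases s.eq_empty_or_nonempty with rfl | ⟨v, hv⟩
  · simp [cliqueTailSum_empty ht]
  obtain ⟨u, rfl⟩ : ∃ u, t = u + 1 := ⟨t - 1, by omega⟩
  rcases Nat.eq_zero_or_pos u with rfl | hu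
  · simp [hG.cliqueTailSum_one]
  have hrest := ih _ (erase_ssubset hv) ht
  have hlink := ih {x ∈ s.erase v | G.Adj v x}
    ((filter_subset _ _).trans_ssubset (erase_ssubset hv)) hu.ne'
  rw [← insert_erase hv, cliqueTailSum_insert (notMem_erase v s), Nat.add_sub_cancel]
  rw [pow_succ] at hrest ⊢
  linarith

theorem IsChordal.cliqueTailSum_nonpos_of_odd (hG : G.IsChordal) (s : Finset V) (ht : Odd t) :
    G.cliqueTailSum s t ≤ 0 := by
  have := hG.neg_one_pow_mul_cliqueTailSum_nonneg s ht.pos.ne'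
  rwa [ht.neg_one_pow, neg_one_mul, neg_nonneg] at this

theorem sum_cliqueComplex_filter_subset [Fintype V] (S : Finset V) (ht : t ≠ 0) :
    ∑ I ∈ (G.cliqueComplex.filter fun I ↦ t ≤ #I).filter (· ⊆ S), (-1 : ℝ) ^ (#I - 1) =
      -G.cliqueTailSum S t := by
  have hfilter : (G.cliqueComplex.filter fun I ↦ t ≤ #I).filter (· ⊆ S) =
      S.powerset.filter fun K : Finset V ↦ G.IsClique (K : Set V) ∧ t ≤ #K := by
    ext K
    simp only [cliqueComplex, mem_filter, mem_powerset, subset_univ, true_and]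
    exact ⟨fun ⟨⟨⟨_, hK⟩, htK⟩, hKS⟩ ↦ ⟨hKS, hK, htK⟩,
      fun ⟨hKS, hK, htK⟩ ↦ ⟨⟨⟨card_pos.1 (by omega), hK⟩, htK⟩, hKS⟩⟩
  rw [hfilter, cliqueTailSum, ← sum_neg_distrib]
  refine sum_congr rfl fun K hK ↦ ?_
  have htK := (mem_filter.1 hK).2.2
  obtain ⟨k, hk⟩ : ∃ k, #K = k + 1 := ⟨#K - 1, by omega⟩
  rw [hk, Nat.add_sub_cancel, pow_succ]
  ring

end CliqueTailSum

end SimpleGraph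

theorem sum_mul_toReal_measure_biInter_nonneg {Ω ι : Type*} [MeasurableSpace Ω] [Fintype ι]
    (μ : Measure Ω) [IsFiniteMeasure μ] {A : ι → Set Ω} (hA : ∀ i, MeasurableSet (A i))
    (𝓘 : Finset (Finset ι)) (c : Finset ι → ℝ)
    (hc : ∀ S : Finset ι, 0 ≤ ∑ I ∈ 𝓘.filter (· ⊆ S), c I) :
    0 ≤ ∑ I ∈ 𝓘, c I * (μ (⋂ i ∈ I, A i)).toReal := by
  have hmeas (I : Finset ι) : MeasurableSet (⋂ i ∈ I, A i) :=
    I.measurableSet_biInter fun i _ ↦ hA i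
  have hint : ∑ I ∈ 𝓘, c I * (μ (⋂ i ∈ I, A i)).toReal =
      ∫ ω, ∑ I ∈ 𝓘, (⋂ i ∈ I, A i).indicator (fun _ ↦ c I) ω ∂μ := by
    rw [integral_finsetSum _ fun I _ ↦ (integrable_const _).indicator (hmeas I)]
    refine sum_congr rfl fun I _ ↦ ?_
    rw [integral_indicator_const _ (hmeas I), smul_eq_mul, mul_comm, measureReal_def]
  rw [hint]
  refine integral_nonneg fun ω ↦ (hc {i | ω ∈ A i}).trans_eq ?_
  rw [sum_filter]
  refine sum_congr rfl fun I _ ↦ ?_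
  simp [Set.indicator_apply, subset_iff]

theorem full_sum_ge_truncated_sum_general {Ω V : Type*} [MeasurableSpace Ω] [Fintype V]
    (μ : Measure Ω) [IsProbabilityMeasure μ] (G : SimpleGraph V) (hG : G.IsChordal)
    (A : V → Set Ω) (hA : ∀ v, MeasurableSet (A v)) (r : ℕ) :
    ∑ I ∈ G.cliqueComplex, (-1 : ℝ) ^ (I.card - 1) * (μ (⋂ i ∈ I, A i)).toReal ≥
      ∑ I ∈ G.cliqueComplex.filter (fun I => I.card ≤ 2 * r),
        (-1 : ℝ) ^ (I.card - 1) * (μ (⋂ i ∈ I, A i)).toReal := by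
  rw [ge_iff_le, ← sum_filter_add_sum_filter_not G.cliqueComplex (fun I ↦ I.card ≤ 2 * r),
    le_add_iff_nonneg_right]
  refine sum_mul_toReal_measure_biInter_nonneg μ hA _ _ fun S ↦ ?_
  have hodd := hG.cliqueTailSum_nonpos_of_odd S (odd_two_mul_add_one r)
  simp only [not_le, Nat.lt_iff_add_one_le]
  rw [G.sum_cliqueComplex_filter_subset S (Nat.succ_ne_zero _)]
  exact neg_nonneg.2 hodd

theorem full_sum_ge_truncated_sum {Ω V : Type*} [MeasurableSpace Ω] [Fintype V] [Nonempty V]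
    (μ : Measure Ω) [IsProbabilityMeasure μ] (G : SimpleGraph V) (hG : G.IsChordal)
    (A : V → Set Ω) (hA : ∀ v, MeasurableSet (A v)) (r : ℕ) (hr : 0 < r) :
    ∑ I ∈ G.cliqueComplex, (-1 : ℝ) ^ (I.card - 1) * (μ (⋂ i ∈ I, A i)).toReal ≥
      ∑ I ∈ G.cliqueComplex.filter (fun I => I.card ≤ 2 * r),
        (-1 : ℝ) ^ (I.card - 1) * (μ (⋂ i ∈ I, A i)).toReal :=
  full_sum_ge_truncated_sum_general μ G hG A hA r
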